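/- arXiv:0802.2344 — 4 statements merged into one kernel-verified Lean document; each statement's English description precedes it below -/
import Mathlib

section
/- Let U ⊆ ℝ² be a connected open set, let (E,F,G) be a metric g on U with Christoffel symbols Γ^i_{jk}, and let K₀,K₁,K₂,K₃ : U → ℝ be arbitrary smooth functions. Define a₁₁ = E·(EG−F²)^{−2/3}, a₁₂ = F·(EG−F²)^{−2/3}, a₂₂ = G·(EG−F²)^{−2/3}. Then the triple (a₁₁,a₁₂,a₂₂) satisfies the linear system (12) with coefficients K₀,…,K₃ if and only if K₀ = −Γ²₁₁, K₁ = Γ¹₁₁ − 2Γ²₁₂, K₂ = −Γ²₂₂ + 2Γ¹₁₂ and K₃ = Γ¹₂₂ on U, i.e. if and only if K₀,…,K₃ are the projective connection coefficients of g. -/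
noncomputable section

/-- The partial derivative of `f : ℝ² → ℝ` in the `i`-th coordinate direction
(`0 ↦ x`, `1 ↦ y`). -/
def pd (i : Fin 2) (f : ℝ × ℝ → ℝ) (p : ℝ × ℝ) : ℝ :=
  fderiv ℝ f p (if i = 0 then ((1 : ℝ), (0 : ℝ)) else ((0 : ℝ), (1 : ℝ)))

/-- The components of the metric `g = E dx² + 2F dx dy + G dy²`. -/
def gc (E F G : ℝ × ℝ → ℝ) (i j : Fin 2) : ℝ × ℝ → ℝ := fun p =>
  if i = 0 then (if j = 0 then E p else F p) else (if j = 0 then F p else G p)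

/-- The components of the inverse metric. -/
def gInv (E F G : ℝ × ℝ → ℝ) (i j : Fin 2) : ℝ × ℝ → ℝ := fun p =>
  (if i = 0 then (if j = 0 then G p else -F p) else (if j = 0 then -F p else E p)) /
    (E p * G p - F p ^ 2)

/-- The Christoffel symbols `Γ^i_{jk}` of the metric `(E,F,G)`. -/
def Chr (E F G : ℝ × ℝ → ℝ) (i j k : Fin 2) : ℝ × ℝ → ℝ := fun p =>
  (1 / 2) * ∑ m : Fin 2, gInv E F G i m p *
    (pd j (gc E F G m k) p + pd k (gc E F G m j) p - pd m (gc E F G j k) p)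

/-- The projective connection coefficient `K₀ = -Γ²₁₁`. -/
def pK0 (E F G : ℝ × ℝ → ℝ) : ℝ × ℝ → ℝ := fun p => - Chr E F G 1 0 0 p
/-- The projective connection coefficient `K₁ = Γ¹₁₁ - 2Γ²₁₂`. -/
def pK1 (E F G : ℝ × ℝ → ℝ) : ℝ × ℝ → ℝ := fun p => Chr E F G 0 0 0 p - 2 * Chr E F G 1 0 1 p
/-- The projective connection coefficient `K₂ = -Γ²₂₂ + 2Γ¹₁₂`. -/
def pK2 (E F G : ℝ × ℝ → ℝ) : ℝ × ℝ → ℝ := fun p => - Chr E F G 1 1 1 p + 2 * Chr E F G 0 0 1 p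
/-- The projective connection coefficient `K₃ = Γ¹₂₂`. -/
def pK3 (E F G : ℝ × ℝ → ℝ) : ℝ × ℝ → ℝ := fun p => Chr E F G 0 1 1 p

/-- The linear system (12). -/
def Sys12 (K₀ K₁ K₂ K₃ a11 a12 a22 : ℝ × ℝ → ℝ) (U : Set (ℝ × ℝ)) : Prop :=
  ∀ p ∈ U,
    pd 0 a11 p - (2/3) * K₁ p * a11 p + 2 * K₀ p * a12 p = 0 ∧
    pd 1 a11 p + 2 * pd 0 a12 p - (4/3) * K₂ p * a11 p + (2/3) * K₁ p * a12 p
      + 2 * K₀ p * a22 p = 0 ∧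
    2 * pd 1 a12 p + pd 0 a22 p - 2 * K₃ p * a11 p - (2/3) * K₂ p * a12 p
      + (4/3) * K₁ p * a22 p = 0 ∧
    pd 1 a22 p - 2 * K₃ p * a12 p + (2/3) * K₂ p * a22 p = 0

/-- The components of a vector field `v = (v¹, v²)`. -/
def vc (v1 v2 : ℝ × ℝ → ℝ) (m : Fin 2) : ℝ × ℝ → ℝ := fun p => if m = 0 then v1 p else v2 p

/-- `v = (v1, v2)` is a Killing vector field for the metric `(E,F,G)` on `U`. -/
def IsKilling (E F G v1 v2 : ℝ × ℝ → ℝ) (U : Set (ℝ × ℝ)) : Prop :=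
  ∀ p ∈ U, ∀ i j : Fin 2,
    (∑ m : Fin 2, (vc v1 v2 m p * pd m (gc E F G i j) p
      + gc E F G m j p * pd i (vc v1 v2 m) p
      + gc E F G i m p * pd j (vc v1 v2 m) p)) = 0

/-! With `w = |EG − F²|^{-2/3}`, the derivatives of `a_{ij} = g_{ij} w` are
`w (∂g_{ij} − (2/3) (∂ det g / det g) g_{ij})`, so after division by `w` the system (12) is an
affine system in `(K₀, K₁, K₂, K₃)`. Its linear part has determinant `9 (EG − F²)² ≠ 0`, and the
projective connection coefficients, written out through the Christoffel symbols, solve it. Hence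
they are its unique solution, pointwise on `U`. -/

open Filter Topology

section PartialDerivatives

variable {f g D : ℝ × ℝ → ℝ} {p : ℝ × ℝ}

lemma pd_congr_of_eventuallyEq (i : Fin 2) (h : f =ᶠ[𝓝 p] g) : pd i f p = pd i g p := by
  rw [pd, pd, h.fderiv_eq]

lemma pd_fun_mul (i : Fin 2) (hf : DifferentiableAt ℝ f p) (hg : DifferentiableAt ℝ g p) :
    pd i (fun q => f q * g q) p = pd i f p * g p + f p * pd i g p := by
  simp only [pd, fderiv_fun_mul hf hg, _root_.add_apply, _root_.smul_apply, smul_eq_mul]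
  ring

lemma pd_det {E F G : ℝ × ℝ → ℝ} (i : Fin 2) (hE : DifferentiableAt ℝ E p)
    (hF : DifferentiableAt ℝ F p) (hG : DifferentiableAt ℝ G p) :
    pd i (fun q => E q * G q - F q ^ 2) p
      = pd i E p * G p + E p * pd i G p - 2 * F p * pd i F p := by
  simp only [pd, fderiv_fun_sub (hE.fun_mul hG) (hF.fun_pow 2), fderiv_fun_mul hE hG,
    fderiv_fun_pow 2 hF, _root_.sub_apply, _root_.add_apply, _root_.smul_apply, smul_eq_mul]
  ring

lemma pd_inv_rpow_sq (i : Fin 2) (hD : DifferentiableAt ℝ D p) (hD0 : D p ≠ 0) :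
    pd i (fun q => ((D q ^ 2) ^ (1 / 3 : ℝ))⁻¹) p
      = -(2 / 3) * (pd i D p / D p) * ((D p ^ 2) ^ (1 / 3 : ℝ))⁻¹ := by
  have hpos : 0 < D p ^ 2 := by positivity
  have hderiv := (hD.fun_pow 2).hasFDerivAt.rpow_const (p := -(1 / 3 : ℝ)) (Or.inl hpos.ne')
  have hfun : (fun q => ((D q ^ 2) ^ (1 / 3 : ℝ))⁻¹) = fun q => (D q ^ 2) ^ (-(1 / 3) : ℝ) :=
    funext fun q => (Real.rpow_neg (sq_nonneg _) _).symm
  rw [hfun, pd, pd, hderiv.fderiv, fderiv_fun_pow 2 hD, Real.rpow_sub hpos, Real.rpow_one,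
    Real.rpow_neg hpos.le]
  simp only [_root_.smul_apply, smul_eq_mul]
  field_simp
  ring

lemma pd_mul_inv_rpow_sq (i : Fin 2) (hf : DifferentiableAt ℝ f p)
    (hD : DifferentiableAt ℝ D p) (hD0 : D p ≠ 0) :
    pd i (fun q => f q * ((D q ^ 2) ^ (1 / 3 : ℝ))⁻¹) p
      = (pd i f p - 2 / 3 * (pd i D p / D p) * f p) * ((D p ^ 2) ^ (1 / 3 : ℝ))⁻¹ := by
  have hw : DifferentiableAt ℝ (fun q => ((D q ^ 2) ^ (1 / 3 : ℝ))⁻¹) p :=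
    ((hD.fun_pow 2).rpow_const (Or.inl (pow_ne_zero 2 hD0))).fun_inv
      (Real.rpow_pos_of_pos (by positivity) _).ne'
  rw [pd_fun_mul i hf hw, pd_inv_rpow_sq i hD hD0]
  ring

end PartialDerivatives

section ChristoffelFormulas

variable (E F G : ℝ × ℝ → ℝ) (p : ℝ × ℝ)

lemma gc_zero_zero : gc E F G 0 0 = E := rfl
lemma gc_zero_one : gc E F G 0 1 = F := rfl
lemma gc_one_zero : gc E F G 1 0 = F := rfl
lemma gc_one_one : gc E F G 1 1 = G := rfl

lemma pK0_eq : pK0 E F G p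
    = (F p * pd 0 E p - 2 * E p * pd 0 F p + E p * pd 1 E p) / (2 * (E p * G p - F p ^ 2)) := by
  simp only [pK0, Chr, gInv, Fin.sum_univ_two, gc_zero_zero, gc_one_zero, Fin.isValue,
    ↓reduceIte, one_ne_zero, div_eq_mul_inv, mul_inv]
  ring

lemma pK1_eq : pK1 E F G p
    = (G p * pd 0 E p - 2 * F p * pd 0 F p + 3 * F p * pd 1 E p - 2 * E p * pd 0 G p)
      / (2 * (E p * G p - F p ^ 2)) := by
  simp only [pK1, Chr, gInv, Fin.sum_univ_two, gc_zero_zero, gc_zero_one, gc_one_zero,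
    gc_one_one, Fin.isValue, ↓reduceIte, one_ne_zero, div_eq_mul_inv, mul_inv]
  ring

lemma pK2_eq : pK2 E F G p
    = (2 * G p * pd 1 E p + 2 * F p * pd 1 F p - 3 * F p * pd 0 G p - E p * pd 1 G p)
      / (2 * (E p * G p - F p ^ 2)) := by
  simp only [pK2, Chr, gInv, Fin.sum_univ_two, gc_zero_zero, gc_zero_one, gc_one_zero,
    gc_one_one, Fin.isValue, ↓reduceIte, one_ne_zero, div_eq_mul_inv, mul_inv]
  ring

lemma pK3_eq : pK3 E F G p
    = (2 * G p * pd 1 F p - G p * pd 0 G p - F p * pd 1 G p) / (2 * (E p * G p - F p ^ 2)) := by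
  simp only [pK3, Chr, gInv, Fin.sum_univ_two, gc_zero_one, gc_one_one, Fin.isValue,
    ↓reduceIte, one_ne_zero, div_eq_mul_inv, mul_inv]
  ring

end ChristoffelFormulas

section PointwiseAlgebra

variable {E F G : ℝ}

-- The determinant of this system is `9 (EG − F²)²`; the coefficients are the rows of its adjugate.
lemma sys12_linearPart_eq_zero_iff {a₀ a₁ a₂ a₃ b₀ b₁ b₂ b₃ : ℝ} (hD : E * G - F ^ 2 ≠ 0) :
    (3 * F * (a₀ - b₀) - E * (a₁ - b₁) = 0 ∧
        3 * G * (a₀ - b₀) + F * (a₁ - b₁) - 2 * E * (a₂ - b₂) = 0 ∧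
        2 * G * (a₁ - b₁) - F * (a₂ - b₂) - 3 * E * (a₃ - b₃) = 0 ∧
        G * (a₂ - b₂) - 3 * F * (a₃ - b₃) = 0) ↔
      a₀ = b₀ ∧ a₁ = b₁ ∧ a₂ = b₂ ∧ a₃ = b₃ := by
  refine ⟨fun ⟨h₁, h₂, h₃, h₄⟩ => ?_, fun ⟨h₀, h₁, h₂, h₃⟩ => by simp [h₀, h₁, h₂, h₃]⟩
  have hdet : 9 * (E * G - F ^ 2) ^ 2 ≠ 0 := by positivity
  refine ⟨?_, ?_, ?_, ?_⟩ <;> refine sub_eq_zero.mp <| (mul_eq_zero.mp ?_).resolve_left hdet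
  · linear_combination (3 * F ^ 3 - 9 * E * F * G) * h₁ + (3 * E * F ^ 2 + 3 * E ^ 2 * G) * h₂
      - 6 * E ^ 2 * F * h₃ + 6 * E ^ 3 * h₄
  · linear_combination (-9 * F ^ 2 * G - 9 * E * G ^ 2) * h₁ + (9 * F ^ 3 + 9 * E * F * G) * h₂
      - 18 * E * F ^ 2 * h₃ + 18 * E ^ 2 * F * h₄
  · linear_combination -18 * F * G ^ 2 * h₁ + 18 * F ^ 2 * G * h₂
      - (9 * F ^ 3 + 9 * E * F * G) * h₃ + (9 * E * F ^ 2 + 9 * E ^ 2 * G) * h₄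
  · linear_combination -6 * G ^ 3 * h₁ + 6 * F * G ^ 2 * h₂
      - (3 * F ^ 2 * G + 3 * E * G ^ 2) * h₃ + (9 * E * F * G - 3 * F ^ 3) * h₄

lemma scaled_sys12_iff {Ex Ey Fx Fy Gx Gy D Dx Dy K₀ K₁ K₂ K₃ w : ℝ}
    (hD : D = E * G - F ^ 2) (hDx : Dx = Ex * G + E * Gx - 2 * F * Fx)
    (hDy : Dy = Ey * G + E * Gy - 2 * F * Fy) (hD0 : D ≠ 0) (hw : w ≠ 0) :
    ((Ex - 2 / 3 * (Dx / D) * E) * w - 2 / 3 * K₁ * (E * w) + 2 * K₀ * (F * w) = 0 ∧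
      (Ey - 2 / 3 * (Dy / D) * E) * w + 2 * ((Fx - 2 / 3 * (Dx / D) * F) * w)
        - 4 / 3 * K₂ * (E * w) + 2 / 3 * K₁ * (F * w) + 2 * K₀ * (G * w) = 0 ∧
      2 * ((Fy - 2 / 3 * (Dy / D) * F) * w) + (Gx - 2 / 3 * (Dx / D) * G) * w
        - 2 * K₃ * (E * w) - 2 / 3 * K₂ * (F * w) + 4 / 3 * K₁ * (G * w) = 0 ∧
      (Gy - 2 / 3 * (Dy / D) * G) * w - 2 * K₃ * (F * w) + 2 / 3 * K₂ * (G * w) = 0) ↔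
    K₀ = (F * Ex - 2 * E * Fx + E * Ey) / (2 * D) ∧
      K₁ = (G * Ex - 2 * F * Fx + 3 * F * Ey - 2 * E * Gx) / (2 * D) ∧
      K₂ = (2 * G * Ey + 2 * F * Fy - 3 * F * Gx - E * Gy) / (2 * D) ∧
      K₃ = (2 * G * Fy - G * Gx - F * Gy) / (2 * D) := by
  subst hDx hDy
  have hfactor {x y : ℝ} (h : x = 2 / 3 * w * y) : x = 0 ↔ y = 0 := by
    rw [h, mul_eq_zero, or_iff_right (mul_ne_zero (by norm_num) hw)]
  refine Iff.trans ?_ (sys12_linearPart_eq_zero_iff (hD ▸ hD0 : E * G - F ^ 2 ≠ 0))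
  -- each equation is `(2/3) w` times the corresponding row of the linear part
  refine and_congr (hfactor ?_) <| and_congr (hfactor ?_) <| and_congr (hfactor ?_) (hfactor ?_)
  all_goals field_simp; subst hD; ring

end PointwiseAlgebra

theorem stmt0_general
    (U : Set (ℝ × ℝ)) (hUopen : IsOpen U)
    (E F G : ℝ × ℝ → ℝ)
    (hE : ContDiffOn ℝ (⊤ : ℕ∞) E U) (hF : ContDiffOn ℝ (⊤ : ℕ∞) F U) (hG : ContDiffOn ℝ (⊤ : ℕ∞) G U)
    (hdet : ∀ p ∈ U, E p * G p - F p ^ 2 ≠ 0)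
    (K₀ K₁ K₂ K₃ : ℝ × ℝ → ℝ)
    (a11 a12 a22 : ℝ × ℝ → ℝ)
    (ha11 : ∀ p ∈ U, a11 p = E p * (((E p * G p - F p ^ 2) ^ 2) ^ ((1:ℝ)/3))⁻¹)
    (ha12 : ∀ p ∈ U, a12 p = F p * (((E p * G p - F p ^ 2) ^ 2) ^ ((1:ℝ)/3))⁻¹)
    (ha22 : ∀ p ∈ U, a22 p = G p * (((E p * G p - F p ^ 2) ^ 2) ^ ((1:ℝ)/3))⁻¹) :
    Sys12 K₀ K₁ K₂ K₃ a11 a12 a22 U ↔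
      ∀ p ∈ U, K₀ p = pK0 E F G p ∧ K₁ p = pK1 E F G p ∧
        K₂ p = pK2 E F G p ∧ K₃ p = pK3 E F G p := by
  refine forall₂_congr fun p hp => ?_
  have hpU : U ∈ 𝓝 p := hUopen.mem_nhds hp
  have hD := hdet p hp
  have hdiff {f : ℝ × ℝ → ℝ} (hf : ContDiffOn ℝ (⊤ : ℕ∞) f U) : DifferentiableAt ℝ f p :=
    (hf.contDiffAt hpU).differentiableAt (by simp)
  have hpd {a f : ℝ × ℝ → ℝ} (hf : ContDiffOn ℝ (⊤ : ℕ∞) f U)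
      (ha : ∀ q ∈ U, a q = f q * (((E q * G q - F q ^ 2) ^ 2) ^ ((1:ℝ)/3))⁻¹) (i : Fin 2) :
      pd i a p = (pd i f p - 2 / 3 * (pd i (fun q => E q * G q - F q ^ 2) p
        / (E p * G p - F p ^ 2)) * f p) * (((E p * G p - F p ^ 2) ^ 2) ^ ((1:ℝ)/3))⁻¹ :=
    (pd_congr_of_eventuallyEq i (eventuallyEq_of_mem hpU ha)).trans <| pd_mul_inv_rpow_sq i
      (hdiff hf) (((hdiff hE).fun_mul (hdiff hG)).fun_sub ((hdiff hF).fun_pow 2)) hD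
  rw [hpd hE ha11, hpd hE ha11, hpd hF ha12, hpd hF ha12, hpd hG ha22, hpd hG ha22,
    ha11 p hp, ha12 p hp, ha22 p hp, pK0_eq, pK1_eq, pK2_eq, pK3_eq]
  exact scaled_sys12_iff rfl (pd_det 0 (hdiff hE) (hdiff hF) (hdiff hG))
    (pd_det 1 (hdiff hE) (hdiff hF) (hdiff hG)) hD
    (inv_ne_zero (Real.rpow_pos_of_pos (by positivity) _).ne')

/-- For a metric `(E,F,G)` on a connected open set `U ⊆ ℝ²` and arbitrary
smooth functions `K₀,…,K₃`, the triple `a_{ij} = g_{ij}·(det g)^{-2/3}` satisfies the linear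
system (12) with coefficients `K₀,…,K₃` if and only if `K₀,…,K₃` are the projective
connection coefficients of `g`. -/
theorem stmt0
    (U : Set (ℝ × ℝ)) (hUopen : IsOpen U) (hUconn : IsConnected U)
    (E F G : ℝ × ℝ → ℝ)
    (hE : ContDiffOn ℝ (⊤ : ℕ∞) E U) (hF : ContDiffOn ℝ (⊤ : ℕ∞) F U) (hG : ContDiffOn ℝ (⊤ : ℕ∞) G U)
    (hdet : ∀ p ∈ U, E p * G p - F p ^ 2 ≠ 0)
    (K₀ K₁ K₂ K₃ : ℝ × ℝ → ℝ)
    (hK₀ : ContDiffOn ℝ (⊤ : ℕ∞) K₀ U) (hK₁ : ContDiffOn ℝ (⊤ : ℕ∞) K₁ U)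
    (hK₂ : ContDiffOn ℝ (⊤ : ℕ∞) K₂ U) (hK₃ : ContDiffOn ℝ (⊤ : ℕ∞) K₃ U)
    (a11 a12 a22 : ℝ × ℝ → ℝ)
    (ha11 : ∀ p ∈ U, a11 p = E p * (((E p * G p - F p ^ 2) ^ 2) ^ ((1:ℝ)/3))⁻¹)
    (ha12 : ∀ p ∈ U, a12 p = F p * (((E p * G p - F p ^ 2) ^ 2) ^ ((1:ℝ)/3))⁻¹)
    (ha22 : ∀ p ∈ U, a22 p = G p * (((E p * G p - F p ^ 2) ^ 2) ^ ((1:ℝ)/3))⁻¹) :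
    Sys12 K₀ K₁ K₂ K₃ a11 a12 a22 U ↔
      ∀ p ∈ U, K₀ p = pK0 E F G p ∧ K₁ p = pK1 E F G p ∧
        K₂ p = pK2 E F G p ∧ K₃ p = pK3 E F G p :=
  stmt0_general U hUopen E F G hE hF hG hdet K₀ K₁ K₂ K₃ a11 a12 a22 ha11 ha12 ha22
end
end

section
/- Let U ⊆ ℝ² be a convex open set and let f, b : U → ℝ be smooth with f everywhere positive. Then f and b satisfy the system ∂_y(f·b) + 2·∂_x f = 0 and ∂_x(f·b) + 2·∂_y f = 0 on U if and only if there exist smooth one-variable functions X (defined on {x+y : (x,y) ∈ U}) and Y (defined on {x−y : (x,y) ∈ U}) such that f(x,y)b(x,y) + 2f(x,y) = Y(x−y) and f(x,y)b(x,y) − 2f(x,y) = X(x+y) for all (x,y) ∈ U. In that case f(x,y) = (Y(x−y) − X(x+y))/4 and b(x,y) = 2·(X(x+y)+Y(x−y))/(Y(x−y)−X(x+y)). -/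
/-!
With `u = fb + 2f` and `v = fb - 2f` the system says exactly that `u` is constant along `(1, 1)`
and `v` along `(-1, 1)`. On a convex set, a function whose derivative kills `e` is constant on
the lines parallel to `e`, so it factors through any linear functional `ℓ` whose kernel is `ℝ e`
(here `x - y` and `x + y`); the factor is smooth because near each value it is the function composed
with an affine section of `ℓ`. Conversely `Y ∘ ℓ` is killed by `e ∈ ker ℓ` by the chain rule.
Finally `f = (u - v)/4` and `fb = (u + v)/2`, and dividing by `4f > 0` recovers `b`.
-/

noncomputable section

open Function Set ContinuousLinearMap

section Factorization

variable {E F : Type*} [NormedAddCommGroup E] [NormedSpace ℝ E] [NormedAddCommGroup F]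
  [NormedSpace ℝ F] {U : Set E} {u : E → F} {e : E} {ℓ : E →L[ℝ] ℝ}

theorem Convex.apply_add_smul_eq_of_fderiv_apply_eq_zero (hU : Convex ℝ U)
    (hu : ∀ p ∈ U, DifferentiableAt ℝ u p) (hder : ∀ p ∈ U, fderiv ℝ u p e = 0)
    {p : E} {r : ℝ} (hp : p ∈ U) (hq : p + r • e ∈ U) : u (p + r • e) = u p := by
  have hseg : ∀ t ∈ Icc (0 : ℝ) 1, p + t • r • e ∈ U := fun t ht => hU.add_smul_mem hp hq ht
  have hderiv : ∀ t ∈ Icc (0 : ℝ) 1, HasDerivAt (fun t : ℝ => u (p + t • r • e)) 0 t := by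
    intro t ht
    have hline : HasDerivAt (fun t : ℝ => p + t • r • e) (r • e) t := by
      simpa using ((hasDerivAt_id t).smul_const (r • e)).const_add p
    simpa [Function.comp_def, hder _ (hseg t ht)] using
      (hu _ (hseg t ht)).hasFDerivAt.comp_hasDerivAt t hline
  have := constant_of_has_deriv_right_zero
    (fun t ht => (hderiv t ht).continuousAt.continuousWithinAt)
    (fun t ht => (hderiv t (Ico_subset_Icc_self ht)).hasDerivWithinAt) 1 (by simp)
  simpa using this

theorem Convex.exists_comp_eq_of_fderiv_apply_eq_zero (hU : Convex ℝ U)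
    (hker : LinearMap.ker (ℓ : E →ₗ[ℝ] ℝ) ≤ ℝ ∙ e) (hu : ∀ p ∈ U, DifferentiableAt ℝ u p)
    (hder : ∀ p ∈ U, fderiv ℝ u p e = 0) : ∃ Y : ℝ → F, ∀ p ∈ U, Y (ℓ p) = u p := by
  have hfactors : FactorsThrough (fun p : U => u p) (fun p : U => ℓ p) := by
    rintro ⟨p, hp⟩ ⟨q, hq⟩ (hpq : ℓ p = ℓ q)
    obtain ⟨r, hr⟩ := Submodule.mem_span_singleton.mp <|
      hker (show q - p ∈ LinearMap.ker (ℓ : E →ₗ[ℝ] ℝ) by simp [hpq])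
    have hq' : q = p + r • e := by rw [hr]; abel
    subst hq'
    exact (hU.apply_add_smul_eq_of_fderiv_apply_eq_zero hu hder hp hq).symm
  exact ⟨extend (fun p : U => ℓ p) (fun p : U => u p) 0,
    fun p hp => hfactors.extend_apply 0 ⟨p, hp⟩⟩

theorem contDiffOn_image_of_comp_eq {n : WithTop ℕ∞} {Y : ℝ → F} (hU : IsOpen U) (hℓ : ℓ ≠ 0)
    (hu : ContDiffOn ℝ n u U) (hY : ∀ p ∈ U, Y (ℓ p) = u p) : ContDiffOn ℝ n Y (ℓ '' U) := by
  obtain ⟨w, hw⟩ := exists_ne_zero hℓ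
  rintro _ ⟨p, hp, rfl⟩
  set φ : ℝ → E := fun s => p + (s - ℓ p) • (ℓ w)⁻¹ • w
  have hφ : ContDiff ℝ n φ := by fun_prop
  have hℓφ : ∀ s, ℓ (φ s) = s := fun s => by simp [φ, hw]
  have hφp : φ (ℓ p) = p := by simp [φ]
  have hnear : ∀ᶠ s in nhds (ℓ p), φ s ∈ U :=
    hφ.continuous.continuousAt.preimage_mem_nhds (by rw [hφp]; exact hU.mem_nhds hp)
  have hYφ : Y =ᶠ[nhds (ℓ p)] u ∘ φ := by
    filter_upwards [hnear] with s hs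
    simpa [hℓφ] using hY (φ s) hs
  have hup : ContDiffAt ℝ n u (φ (ℓ p)) := by rw [hφp]; exact hu.contDiffAt (hU.mem_nhds hp)
  exact ((hup.comp _ hφ.contDiffAt).congr_of_eventuallyEq hYφ).contDiffWithinAt

theorem fderiv_apply_eq_zero_of_comp_eq {Y : ℝ → F} (hU : IsOpen U) (hℓ : ℓ ≠ 0)
    (hY : DifferentiableOn ℝ Y (ℓ '' U)) (hu : ∀ p ∈ U, Y (ℓ p) = u p) (he : ℓ e = 0)
    {p : E} (hp : p ∈ U) : fderiv ℝ u p e = 0 := by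
  have hYp : DifferentiableAt ℝ Y (ℓ p) :=
    hY.differentiableAt ((ℓ.isOpenMap_of_ne_zero hℓ U hU).mem_nhds (mem_image_of_mem ℓ hp))
  have hup : u =ᶠ[nhds p] fun q => Y (ℓ q) := by
    filter_upwards [hU.mem_nhds hp] with q hq
    exact (hu q hq).symm
  rw [hup.fderiv_eq, show (fun q => Y (ℓ q)) = Y ∘ ℓ from rfl,
    fderiv_comp p hYp ℓ.differentiableAt]
  simp [he]

theorem Convex.fderiv_apply_eq_zero_iff_exists_contDiffOn_comp_eq {n : WithTop ℕ∞}
    (hUo : IsOpen U) (hUc : Convex ℝ U) (hℓ : ℓ ≠ 0) (hker : LinearMap.ker (ℓ : E →ₗ[ℝ] ℝ) ≤ ℝ ∙ e)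
    (he : ℓ e = 0) (hu : ContDiffOn ℝ n u U) (hn : n ≠ 0) :
    (∀ p ∈ U, fderiv ℝ u p e = 0) ↔
      ∃ Y : ℝ → F, ContDiffOn ℝ n Y (ℓ '' U) ∧ ∀ p ∈ U, Y (ℓ p) = u p := by
  have hdiff : ∀ p ∈ U, DifferentiableAt ℝ u p := fun p hp =>
    (hu.contDiffAt (hUo.mem_nhds hp)).differentiableAt hn
  constructor
  · intro hder
    obtain ⟨Y, hY⟩ := hUc.exists_comp_eq_of_fderiv_apply_eq_zero hker hdiff hder
    exact ⟨Y, contDiffOn_image_of_comp_eq hUo hℓ hu hY, hY⟩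
  · rintro ⟨Y, hYs, hY⟩ p hp
    exact fderiv_apply_eq_zero_of_comp_eq hUo hℓ (hYs.differentiableOn hn) hY he hp

end Factorization

section Plane

theorem ker_fst_add_snd_le_span :
    LinearMap.ker ((fst ℝ ℝ ℝ + snd ℝ ℝ ℝ : ℝ × ℝ →L[ℝ] ℝ) : ℝ × ℝ →ₗ[ℝ] ℝ) ≤
      ℝ ∙ ((-1 : ℝ), (1 : ℝ)) := by
  intro v hv
  simp only [LinearMap.mem_ker, coe_coe, add_apply, coe_fst', coe_snd'] at hv
  exact Submodule.mem_span_singleton.mpr ⟨v.2, Prod.ext (by simp; linarith) (by simp)⟩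

theorem ker_fst_sub_snd_le_span :
    LinearMap.ker ((fst ℝ ℝ ℝ - snd ℝ ℝ ℝ : ℝ × ℝ →L[ℝ] ℝ) : ℝ × ℝ →ₗ[ℝ] ℝ) ≤
      ℝ ∙ ((1 : ℝ), (1 : ℝ)) := by
  intro v hv
  simp only [LinearMap.mem_ker, coe_coe, sub_apply, coe_fst', coe_snd'] at hv
  exact Submodule.mem_span_singleton.mpr ⟨v.2, Prod.ext (by simp; linarith) (by simp)⟩

theorem pd_system_iff {f g : ℝ × ℝ → ℝ} {p : ℝ × ℝ} (hf : DifferentiableAt ℝ f p)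
    (hg : DifferentiableAt ℝ g p) :
    (pd 1 g p + 2 * pd 0 f p = 0 ∧ pd 0 g p + 2 * pd 1 f p = 0) ↔
      (fderiv ℝ (fun q => g q + 2 * f q) p (1, 1) = 0 ∧
        fderiv ℝ (fun q => g q - 2 * f q) p (-1, 1) = 0) := by
  have hadd : HasFDerivAt (fun q => g q + 2 * f q) (fderiv ℝ g p + (2 : ℝ) • fderiv ℝ f p) p :=
    hg.hasFDerivAt.add (hf.hasFDerivAt.const_mul 2)
  have hsub : HasFDerivAt (fun q => g q - 2 * f q) (fderiv ℝ g p - (2 : ℝ) • fderiv ℝ f p) p :=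
    hg.hasFDerivAt.sub (hf.hasFDerivAt.const_mul 2)
  rw [hadd.fderiv, hsub.fderiv,
    show ((1 : ℝ), (1 : ℝ)) = (1, 0) + (0, 1) by simp,
    show ((-1 : ℝ), (1 : ℝ)) = -(1, 0) + (0, 1) by simp]
  simp only [pd, add_apply, sub_apply, smul_apply, map_add, map_neg, smul_eq_mul, Fin.isValue,
    ↓reduceIte, one_ne_zero]
  constructor <;> rintro ⟨h₁, h₂⟩ <;> constructor <;> linarith

end Plane

/-- the Liouville case. On a convex open set `U`, the system
`∂_y(fb) + 2∂_x f = 0`, `∂_x(fb) + 2∂_y f = 0` holds iff `fb + 2f = Y(x−y)` and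
`fb − 2f = X(x+y)` for smooth one-variable functions `X`, `Y`; in that case
`f = (Y−X)/4` and `b = 2(X+Y)/(Y−X)`. -/
theorem stmt6
    (U : Set (ℝ × ℝ)) (hUopen : IsOpen U) (hUconv : Convex ℝ U)
    (f b : ℝ × ℝ → ℝ)
    (hf : ContDiffOn ℝ (⊤ : ℕ∞) f U) (hb : ContDiffOn ℝ (⊤ : ℕ∞) b U)
    (hfpos : ∀ p ∈ U, 0 < f p) :
    ((∀ p ∈ U,
        pd 1 (fun q => f q * b q) p + 2 * pd 0 f p = 0 ∧
        pd 0 (fun q => f q * b q) p + 2 * pd 1 f p = 0) ↔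
      (∃ X Y : ℝ → ℝ,
        ContDiffOn ℝ (⊤ : ℕ∞) X {t | ∃ p ∈ U, t = p.1 + p.2} ∧
        ContDiffOn ℝ (⊤ : ℕ∞) Y {t | ∃ p ∈ U, t = p.1 - p.2} ∧
        ∀ p ∈ U, f p * b p + 2 * f p = Y (p.1 - p.2) ∧
          f p * b p - 2 * f p = X (p.1 + p.2))) ∧
    (∀ X Y : ℝ → ℝ,
      (∀ p ∈ U, f p * b p + 2 * f p = Y (p.1 - p.2) ∧
        f p * b p - 2 * f p = X (p.1 + p.2)) →
      ∀ p ∈ U, f p = (Y (p.1 - p.2) - X (p.1 + p.2)) / 4 ∧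
        b p = 2 * (X (p.1 + p.2) + Y (p.1 - p.2)) / (Y (p.1 - p.2) - X (p.1 + p.2))) := by
  have hdiff {g : ℝ × ℝ → ℝ} (hg : ContDiffOn ℝ (⊤ : ℕ∞) g U) : ∀ p ∈ U, DifferentiableAt ℝ g p :=
    fun p hp => (hg.contDiffAt (hUopen.mem_nhds hp)).differentiableAt (by simp)
  have hsys : ∀ p ∈ U, _ := fun p hp => pd_system_iff (hdiff hf p hp) (hdiff (hf.mul hb) p hp)
  have hY := hUconv.fderiv_apply_eq_zero_iff_exists_contDiffOn_comp_eq
    (u := fun q => f q * b q + 2 * f q) hUopen (DFunLike.ne_iff.mpr ⟨(1, 0), by simp⟩)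
    ker_fst_sub_snd_le_span (by simp) ((hf.mul hb).add (contDiffOn_const.mul hf)) (by simp)
  have hX := hUconv.fderiv_apply_eq_zero_iff_exists_contDiffOn_comp_eq
    (u := fun q => f q * b q - 2 * f q) hUopen (DFunLike.ne_iff.mpr ⟨(1, 0), by simp⟩)
    ker_fst_add_snd_le_span (by simp) ((hf.mul hb).sub (contDiffOn_const.mul hf)) (by simp)
  have hsumSet : (fst ℝ ℝ ℝ + snd ℝ ℝ ℝ) '' U = {t | ∃ p ∈ U, t = p.1 + p.2} := by
    ext; simp [eq_comm]
  have hdiffSet : (fst ℝ ℝ ℝ - snd ℝ ℝ ℝ) '' U = {t | ∃ p ∈ U, t = p.1 - p.2} := by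
    ext; simp [eq_comm]
  refine ⟨⟨fun h => ?_, ?_⟩, fun X Y hXY p hp => ?_⟩
  · obtain ⟨Y, hYs, hY⟩ := hY.mp fun p hp => ((hsys p hp).mp (h p hp)).1
    obtain ⟨X, hXs, hX⟩ := hX.mp fun p hp => ((hsys p hp).mp (h p hp)).2
    exact ⟨X, Y, hsumSet ▸ hXs, hdiffSet ▸ hYs, fun p hp => ⟨(hY p hp).symm, (hX p hp).symm⟩⟩
  · rintro ⟨X, Y, hXs, hYs, hXY⟩ p hp
    exact (hsys p hp).mpr ⟨hY.mpr ⟨Y, hdiffSet ▸ hYs, fun q hq => (hXY q hq).1.symm⟩ p hp,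
      hX.mpr ⟨X, hsumSet ▸ hXs, fun q hq => (hXY q hq).2.symm⟩ p hp⟩
  · obtain ⟨h₁, h₂⟩ := hXY p hp
    have hf₀ := (hfpos p hp).ne'
    refine ⟨by linarith, ?_⟩
    rw [show Y (p.1 - p.2) - X (p.1 + p.2) = 4 * f p by linarith, ← h₁, ← h₂]
    field_simp
    ring
end
end

section
/- Let I, J ⊆ ℝ be open intervals, U = I × J, and let f, b : U → ℝ be smooth with f everywhere positive. Then f and b satisfy the system ∂_x(f·b) = 0 and ∂_y(f·b) + 2·∂_x f = 0 on U if and only if there exist smooth functions Y, Ŷ : J → ℝ such that f(x,y)·b(x,y) = −Y(y) and f(x,y) = (x/2)·Y′(y) + Ŷ(y) for all (x,y) ∈ U. -/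
/-! Since `∂_x(fb) = 0` and `I` is an interval, `fb` depends on `y` alone, say `fb = -Y(y)`.
The second equation then reads `∂_x f = Y′(y)/2`, so `f` is affine in `x` with slope `Y′(y)/2`.
Conversely, both `-Y(y)` and `(x/2) Y′(y) + Ŷ(y)` are of the form `x·a(y) + c(y)`, whose partial
derivatives are read off directly. -/

noncomputable section

open Filter Topology

lemma Filter.EventuallyEq.pd_eq {F G : ℝ × ℝ → ℝ} {p : ℝ × ℝ} (h : F =ᶠ[𝓝 p] G) (i : Fin 2) :
    pd i F p = pd i G p := by
  rw [pd, pd, h.fderiv_eq]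

lemma DifferentiableAt.hasDerivAt_pd_zero {F : ℝ × ℝ → ℝ} {x y : ℝ}
    (hF : DifferentiableAt ℝ F (x, y)) : HasDerivAt (fun t => F (t, y)) (pd 0 F (x, y)) x := by
  simpa [pd, Function.comp_def] using
    hF.hasFDerivAt.comp_hasDerivAt x ((hasDerivAt_id x).prodMk (hasDerivAt_const x y))

lemma IsOpen.eq_add_mul_of_hasDerivAt {s : Set ℝ} (hs : IsOpen s) (hs' : IsPreconnected s)
    {h : ℝ → ℝ} {c : ℝ} (hd : ∀ t ∈ s, HasDerivAt h c t) {x x₀ : ℝ} (hx : x ∈ s)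
    (hx₀ : x₀ ∈ s) : h x = h x₀ + (x - x₀) * c := by
  have hline : ∀ t, HasDerivAt (fun t => h x₀ + (t - x₀) * c) c t := fun t => by
    simpa using (((hasDerivAt_id t).sub_const x₀).mul_const c).const_add (h x₀)
  refine hs.eqOn_of_deriv_eq hs' (fun t ht => (hd t ht).differentiableAt.differentiableWithinAt)
    (fun t _ => (hline t).differentiableAt.differentiableWithinAt)
    (fun t ht => ?_) hx₀ (by simp) hx
  rw [(hd t ht).deriv, (hline t).deriv]

lemma eq_add_mul_of_pd_zero_eq {I : Set ℝ} (hI : IsOpen I) (hI' : IsPreconnected I)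
    {F : ℝ × ℝ → ℝ} {y c : ℝ} (hF : ∀ t ∈ I, DifferentiableAt ℝ F (t, y))
    (hpd : ∀ t ∈ I, pd 0 F (t, y) = c) {x x₀ : ℝ} (hx : x ∈ I) (hx₀ : x₀ ∈ I) :
    F (x, y) = F (x₀, y) + (x - x₀) * c :=
  hI.eq_add_mul_of_hasDerivAt hI' (fun t ht => hpd t ht ▸ (hF t ht).hasDerivAt_pd_zero) hx hx₀

section AffineInX

variable {a c : ℝ → ℝ} {x y : ℝ}

lemma hasFDerivAt_affine_in_fst (ha : DifferentiableAt ℝ a y) (hc : DifferentiableAt ℝ c y) :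
    HasFDerivAt (fun q : ℝ × ℝ => q.1 * a q.2 + c q.2)
      (a y • ContinuousLinearMap.fst ℝ ℝ ℝ +
        (x * deriv a y + deriv c y) • ContinuousLinearMap.snd ℝ ℝ ℝ) (x, y) := by
  have hsnd : HasFDerivAt (Prod.snd : ℝ × ℝ → ℝ) (ContinuousLinearMap.snd ℝ ℝ ℝ) (x, y) :=
    hasFDerivAt_snd
  have hA := ha.hasDerivAt.comp_hasFDerivAt (x, y) hsnd
  have hC := hc.hasDerivAt.comp_hasFDerivAt (x, y) hsnd
  refine ((hasFDerivAt_fst.mul hA).add hC).congr_fderiv ?_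
  ext <;> simp

lemma pd_zero_affine_in_fst (ha : DifferentiableAt ℝ a y) (hc : DifferentiableAt ℝ c y) :
    pd 0 (fun q : ℝ × ℝ => q.1 * a q.2 + c q.2) (x, y) = a y := by
  simp [pd, (hasFDerivAt_affine_in_fst (x := x) ha hc).fderiv]

lemma pd_one_affine_in_fst (ha : DifferentiableAt ℝ a y) (hc : DifferentiableAt ℝ c y) :
    pd 1 (fun q : ℝ × ℝ => q.1 * a q.2 + c q.2) (x, y) = x * deriv a y + deriv c y := by
  simp [pd, (hasFDerivAt_affine_in_fst (x := x) ha hc).fderiv]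

lemma pd_zero_comp_snd (hc : DifferentiableAt ℝ c y) :
    pd 0 (fun q : ℝ × ℝ => c q.2) (x, y) = 0 := by
  simpa using pd_zero_affine_in_fst (a := fun _ => 0) (x := x) (differentiableAt_const 0) hc

lemma pd_one_comp_snd (hc : DifferentiableAt ℝ c y) :
    pd 1 (fun q : ℝ × ℝ => c q.2) (x, y) = deriv c y := by
  simpa using pd_one_affine_in_fst (a := fun _ => 0) (x := x) (differentiableAt_const 0) hc

end AffineInX

lemma ContDiffOn.slice_snd {I J : Set ℝ} {F : ℝ × ℝ → ℝ} {n : WithTop ℕ∞}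
    (hF : ContDiffOn ℝ n F (I ×ˢ J)) {x₀ : ℝ} (hx₀ : x₀ ∈ I) :
    ContDiffOn ℝ n (fun t => F (x₀, t)) J :=
  hF.comp (contDiff_const.prodMk contDiff_id).contDiffOn fun _ ht => ⟨hx₀, ht⟩

section JordanSystem

variable {I J : Set ℝ} {f b : ℝ × ℝ → ℝ}

lemma exists_of_pd_system (hI : IsOpen I) (hI' : IsPreconnected I) (hJ : IsOpen J)
    (hf : ContDiffOn ℝ (⊤ : ℕ∞) f (I ×ˢ J)) (hb : ContDiffOn ℝ (⊤ : ℕ∞) b (I ×ˢ J))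
    (hsys : ∀ p ∈ I ×ˢ J,
      pd 0 (fun q => f q * b q) p = 0 ∧ pd 1 (fun q => f q * b q) p + 2 * pd 0 f p = 0)
    {x₀ : ℝ} (hx₀ : x₀ ∈ I) :
    ∃ Y Yhat : ℝ → ℝ, ContDiffOn ℝ (⊤ : ℕ∞) Y J ∧ ContDiffOn ℝ (⊤ : ℕ∞) Yhat J ∧
      ∀ p ∈ I ×ˢ J, f p * b p = -Y p.2 ∧ f p = (p.1 / 2) * deriv Y p.2 + Yhat p.2 := by
  have hU : IsOpen (I ×ˢ J) := hI.prod hJ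
  have hfb : ContDiffOn ℝ (⊤ : ℕ∞) (fun q => f q * b q) (I ×ˢ J) := hf.mul hb
  have hfd := hf.differentiableOn (by simp)
  have hfbd := hfb.differentiableOn (by simp)
  set Y : ℝ → ℝ := fun t => -(f (x₀, t) * b (x₀, t))
  have hY : ContDiffOn ℝ (⊤ : ℕ∞) Y J := (hfb.slice_snd hx₀).neg
  have hfb_eq : Set.EqOn (fun q => f q * b q) (fun q => -Y q.2) (I ×ˢ J) := by
    rintro ⟨x, y⟩ ⟨hx, hy⟩
    simpa [Y] using eq_add_mul_of_pd_zero_eq hI hI'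
      (fun t ht => hfbd.differentiableAt (hU.mem_nhds ⟨ht, hy⟩))
      (fun t ht => (hsys (t, y) ⟨ht, hy⟩).1) hx hx₀
  have hf_x : ∀ x ∈ I, ∀ y ∈ J, pd 0 f (x, y) = deriv Y y / 2 := by
    intro x hx y hy
    have hfb_y : pd 1 (fun q => f q * b q) (x, y) = -deriv Y y := by
      rw [(hfb_eq.eventuallyEq_of_mem (hU.mem_nhds ⟨hx, hy⟩)).pd_eq,
        pd_one_comp_snd (c := fun t => -Y t)
          ((hY.differentiableOn (by simp)).differentiableAt (hJ.mem_nhds hy)).neg,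
        deriv.fun_neg]
    linarith [(hsys (x, y) ⟨hx, hy⟩).2]
  refine ⟨Y, fun t => f (x₀, t) - x₀ * (deriv Y t / 2), hY,
    (hf.slice_snd hx₀).sub (contDiffOn_const.mul ((hY.deriv_of_isOpen hJ (by simp)).div_const 2)),
    ?_⟩
  rintro ⟨x, y⟩ ⟨hx, hy⟩
  refine ⟨hfb_eq (Set.mk_mem_prod hx hy), ?_⟩
  rw [eq_add_mul_of_pd_zero_eq hI hI' (fun t ht => hfd.differentiableAt (hU.mem_nhds ⟨ht, hy⟩))
    (fun t ht => hf_x t ht y hy) hx hx₀]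
  ring

lemma pd_system_of_eq (hI : IsOpen I) (hJ : IsOpen J) {Y Yhat : ℝ → ℝ}
    (hY : ContDiffOn ℝ 2 Y J) (hYhat : DifferentiableOn ℝ Yhat J)
    (heq : ∀ p ∈ I ×ˢ J, f p * b p = -Y p.2 ∧ f p = (p.1 / 2) * deriv Y p.2 + Yhat p.2) :
    ∀ p ∈ I ×ˢ J,
      pd 0 (fun q => f q * b q) p = 0 ∧ pd 1 (fun q => f q * b q) p + 2 * pd 0 f p = 0 := by
  rintro ⟨x, y⟩ ⟨hx, hy⟩
  have hU : I ×ˢ J ∈ 𝓝 (x, y) := (hI.prod hJ).mem_nhds ⟨hx, hy⟩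
  have hYy := (hY.differentiableOn (by simp)).differentiableAt (hJ.mem_nhds hy)
  have hdY : ContDiffOn ℝ 1 (deriv Y) J := hY.deriv_of_isOpen hJ (by norm_num)
  have hdYy := (hdY.differentiableOn (by simp)).differentiableAt (hJ.mem_nhds hy)
  have hYhaty := hYhat.differentiableAt (hJ.mem_nhds hy)
  have hfb_eq : (fun q => f q * b q) =ᶠ[𝓝 (x, y)] fun q => -Y q.2 :=
    Set.EqOn.eventuallyEq_of_mem (fun q hq => (heq q hq).1) hU
  have hf_eq : f =ᶠ[𝓝 (x, y)] fun q => q.1 * (deriv Y q.2 / 2) + Yhat q.2 :=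
    Set.EqOn.eventuallyEq_of_mem (fun q hq => by rw [(heq q hq).2]; ring) hU
  have hfb_x : pd 0 (fun q => -Y q.2) (x, y) = 0 := pd_zero_comp_snd hYy.neg
  have hfb_y : pd 1 (fun q => -Y q.2) (x, y) = -deriv Y y := by
    rw [pd_one_comp_snd (c := fun t => -Y t) hYy.neg, deriv.fun_neg]
  have hf_x : pd 0 (fun q => q.1 * (deriv Y q.2 / 2) + Yhat q.2) (x, y) = deriv Y y / 2 :=
    pd_zero_affine_in_fst (a := fun t => deriv Y t / 2) (hdYy.div_const 2) hYhaty
  rw [hfb_eq.pd_eq, hfb_eq.pd_eq, hf_eq.pd_eq, hfb_x, hfb_y, hf_x]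
  constructor <;> ring

end JordanSystem

theorem stmt8_general
    (I J : Set ℝ) (hIopen : IsOpen I) (hIint : I.OrdConnected)
    (hJopen : IsOpen J)
    (f b : ℝ × ℝ → ℝ)
    (hf : ContDiffOn ℝ (⊤ : ℕ∞) f (I ×ˢ J)) (hb : ContDiffOn ℝ (⊤ : ℕ∞) b (I ×ˢ J)) :
    (∀ p ∈ I ×ˢ J,
        pd 0 (fun q => f q * b q) p = 0 ∧
        pd 1 (fun q => f q * b q) p + 2 * pd 0 f p = 0) ↔
      ∃ Y Yhat : ℝ → ℝ, ContDiffOn ℝ (⊤ : ℕ∞) Y J ∧ ContDiffOn ℝ (⊤ : ℕ∞) Yhat J ∧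
        ∀ p ∈ I ×ˢ J, f p * b p = - Y p.2 ∧
          f p = (p.1 / 2) * deriv Y p.2 + Yhat p.2 := by
  constructor
  · intro hsys
    rcases I.eq_empty_or_nonempty with rfl | ⟨x₀, hx₀⟩
    · exact ⟨0, 0, contDiffOn_const, contDiffOn_const, by simp⟩
    exact exists_of_pd_system hIopen hIint.isPreconnected hJopen hf hb hsys hx₀
  · rintro ⟨Y, Yhat, hY, hYhat, heq⟩
    exact pd_system_of_eq hIopen hJopen (hY.of_le (WithTop.coe_le_coe.2 le_top))
      (hYhat.differentiableOn (by simp)) heq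

/-- the Jordan-block case. On a product of open intervals `U = I × J`,
the system `∂_x(fb) = 0`, `∂_y(fb) + 2∂_x f = 0` holds iff `f·b = −Y(y)` and
`f = (x/2)·Y′(y) + Ŷ(y)` for smooth one-variable functions `Y, Ŷ` on `J`. -/
theorem stmt8
    (I J : Set ℝ) (hIopen : IsOpen I) (hIint : I.OrdConnected)
    (hJopen : IsOpen J) (hJint : J.OrdConnected)
    (f b : ℝ × ℝ → ℝ)
    (hf : ContDiffOn ℝ (⊤ : ℕ∞) f (I ×ˢ J)) (hb : ContDiffOn ℝ (⊤ : ℕ∞) b (I ×ˢ J))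
    (hfpos : ∀ p ∈ I ×ˢ J, 0 < f p) :
    (∀ p ∈ I ×ˢ J,
        pd 0 (fun q => f q * b q) p = 0 ∧
        pd 1 (fun q => f q * b q) p + 2 * pd 0 f p = 0) ↔
      ∃ Y Yhat : ℝ → ℝ, ContDiffOn ℝ (⊤ : ℕ∞) Y J ∧ ContDiffOn ℝ (⊤ : ℕ∞) Yhat J ∧
        ∀ p ∈ I ×ˢ J, f p * b p = - Y p.2 ∧
          f p = (p.1 / 2) * deriv Y p.2 + Yhat p.2 :=
  stmt8_general I J hIopen hIint hJopen f b hf hb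
end
end

section
/- Let c ∈ ℝ \ {0} and let U be a nonempty connected open subset of { (x,y) ∈ ℝ² : x ≠ 0, y ≠ 0, x ≠ y }. Consider on U the metric g with components E = (1/x − 1/y)·c·e^{−3x}/x, F = 0, G = (1/x − 1/y)·e^{−3y}/y, and let K₀,…,K₃ be its projective connection coefficients. Then: (i) ∂_x K_i + ∂_y K_i = 0 on U for i = 0,1,2,3, i.e. the projective connection of g is invariant under the flow of v = ∂/∂x + ∂/∂y, so v is a projective vector field for g; and (ii) there is no constant λ ∈ ℝ such that ∂_x g_{ij} + ∂_y g_{ij} = λ·g_{ij} on U for all i,j ∈ {1,2}, i.e. v is not an infinitesimal homothety of g. -/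
noncomputable section

/-! For a diagonal metric `E dx² + G dy²` the projective connection coefficients are
`K₀ = E_y / 2G`, `K₁ = E_x / 2E - G_x / G`, `K₂ = E_y / E - G_y / 2G` and `K₃ = -G_x / 2E`.
In case 1a the logarithmic derivatives of `E` and `G` are rational, and these coefficients come out
as functions of `y - x` alone, so `∂_x + ∂_y` kills them. On the other hand
`(∂_x + ∂_y) log E = -3 - 2/x - 1/y` and `(∂_x + ∂_y) log G = -3 - 1/x - 2/y`; a homothety would make
both equal to `λ`, forcing `x = y`. -/

open Real ContinuousLinearMap Filter Topology

section PartialDerivatives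

variable {f : ℝ × ℝ → ℝ} {p : ℝ × ℝ} {a : ℝ}

lemma pd_const_zero (i : Fin 2) : pd i (fun _ => 0) p = 0 := by simp [pd]

lemma pd_zero_eq_of_hasDerivAt (hf : DifferentiableAt ℝ f p)
    (h : HasDerivAt (fun x => f (x, p.2)) a p.1) : pd 0 f p = a := by
  have hsec := hf.hasFDerivAt.comp_hasDerivAt p.1
    ((hasDerivAt_id p.1).prodMk (hasDerivAt_const p.1 p.2))
  simpa [pd] using hsec.unique h

lemma pd_one_eq_of_hasDerivAt (hf : DifferentiableAt ℝ f p)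
    (h : HasDerivAt (fun y => f (p.1, y)) a p.2) : pd 1 f p = a := by
  have hsec := hf.hasFDerivAt.comp_hasDerivAt p.2
    ((hasDerivAt_const p.2 p.1).prodMk (hasDerivAt_id p.2))
  simpa [pd] using hsec.unique h

lemma pd_add_pd_eq_zero_of_eqOn_sub {K : ℝ × ℝ → ℝ} (φ : ℝ → ℝ) {S : Set (ℝ × ℝ)}
    (hS : IsOpen S) (hK : ∀ q ∈ S, K q = φ (q.2 - q.1)) (hp : p ∈ S)
    (hφ : DifferentiableAt ℝ φ (p.2 - p.1)) : pd 0 K p + pd 1 K p = 0 := by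
  have hKφ : K =ᶠ[𝓝 p] fun q => φ (q.2 - q.1) :=
    eventually_of_mem (hS.mem_nhds hp) hK
  have hderiv : HasFDerivAt (fun q : ℝ × ℝ => φ (q.2 - q.1))
      (deriv φ (p.2 - p.1) • (snd ℝ ℝ ℝ - fst ℝ ℝ ℝ)) p :=
    hφ.hasDerivAt.comp_hasFDerivAt p (hasFDerivAt_snd.sub hasFDerivAt_fst)
  simp [pd, hKφ.fderiv_eq, hderiv.fderiv]

end PartialDerivatives

section DiagonalMetric

variable {E G : ℝ × ℝ → ℝ} {p : ℝ × ℝ}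

lemma gc_diag_zero_zero : gc E (fun _ => 0) G 0 0 = E := rfl
lemma gc_diag_one_one : gc E (fun _ => 0) G 1 1 = G := rfl
lemma gc_diag_zero_one : gc E (fun _ => 0) G 0 1 = fun _ => 0 := rfl
lemma gc_diag_one_zero : gc E (fun _ => 0) G 1 0 = fun _ => 0 := rfl

lemma pK0_diag (hE : E p ≠ 0) (hG : G p ≠ 0) :
    pK0 E (fun _ => 0) G p = pd 1 E p / (2 * G p) := by
  simp only [pK0, Chr, gInv, Fin.sum_univ_two, Fin.isValue, one_ne_zero, reduceIte, gc_diag_zero_zero,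
    gc_diag_one_zero, pd_const_zero]
  field_simp
  ring

lemma pK1_diag (hE : E p ≠ 0) (hG : G p ≠ 0) :
    pK1 E (fun _ => 0) G p = pd 0 E p / (2 * E p) - pd 0 G p / G p := by
  simp only [pK1, Chr, gInv, Fin.sum_univ_two, Fin.isValue, one_ne_zero, reduceIte, gc_diag_zero_zero,
    gc_diag_one_one, gc_diag_zero_one, gc_diag_one_zero, pd_const_zero]
  field_simp
  ring

lemma pK2_diag (hE : E p ≠ 0) (hG : G p ≠ 0) :
    pK2 E (fun _ => 0) G p = pd 1 E p / E p - pd 1 G p / (2 * G p) := by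
  simp only [pK2, Chr, gInv, Fin.sum_univ_two, Fin.isValue, one_ne_zero, reduceIte, gc_diag_zero_zero,
    gc_diag_one_one, gc_diag_zero_one, gc_diag_one_zero, pd_const_zero]
  field_simp
  ring

lemma pK3_diag (hE : E p ≠ 0) (hG : G p ≠ 0) :
    pK3 E (fun _ => 0) G p = -pd 0 G p / (2 * E p) := by
  simp only [pK3, Chr, gInv, Fin.sum_univ_two, Fin.isValue, one_ne_zero, reduceIte, gc_diag_one_one,
    gc_diag_zero_one, pd_const_zero]
  field_simp
  ring

end DiagonalMetric

section Case1a

def case1aDomain : Set (ℝ × ℝ) := {p | p.1 ≠ 0 ∧ p.2 ≠ 0 ∧ p.1 ≠ p.2}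

def case1aE (c : ℝ) (p : ℝ × ℝ) : ℝ := (1 / p.1 - 1 / p.2) * (c * exp (-3 * p.1) / p.1)

def case1aG (p : ℝ × ℝ) : ℝ := (1 / p.1 - 1 / p.2) * (exp (-3 * p.2) / p.2)

lemma isOpen_case1aDomain : IsOpen case1aDomain :=
  (isOpen_ne_fun continuous_fst continuous_const).inter
    ((isOpen_ne_fun continuous_snd continuous_const).inter
      (isOpen_ne_fun continuous_fst continuous_snd))

variable {c : ℝ} {p : ℝ × ℝ}

lemma sub_ne_zero_of_mem_case1aDomain (hp : p ∈ case1aDomain) : p.2 - p.1 ≠ 0 :=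
  sub_ne_zero.2 hp.2.2.symm

lemma case1aE_ne_zero (hc : c ≠ 0) (hp : p ∈ case1aDomain) : case1aE c p ≠ 0 := by
  obtain ⟨hx, hy, hxy⟩ := hp
  have hinv : 1 / p.1 - 1 / p.2 ≠ 0 := by
    rw [sub_ne_zero]
    exact fun h => hxy (by simpa using h)
  unfold case1aE
  positivity

lemma case1aG_ne_zero (hp : p ∈ case1aDomain) : case1aG p ≠ 0 := by
  obtain ⟨hx, hy, hxy⟩ := hp
  have hinv : 1 / p.1 - 1 / p.2 ≠ 0 := by
    rw [sub_ne_zero]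
    exact fun h => hxy (by simpa using h)
  unfold case1aG
  positivity

lemma differentiableAt_case1aE (hp : p ∈ case1aDomain) : DifferentiableAt ℝ (case1aE c) p := by
  obtain ⟨hx, hy, -⟩ := hp
  unfold case1aE
  fun_prop (disch := assumption)

lemma differentiableAt_case1aG (hp : p ∈ case1aDomain) : DifferentiableAt ℝ case1aG p := by
  obtain ⟨hx, hy, -⟩ := hp
  unfold case1aG
  fun_prop (disch := assumption)

lemma pd_zero_case1aE (hp : p ∈ case1aDomain) :
    pd 0 (case1aE c) p = case1aE c p * (-3 - 2 / p.1 - 1 / (p.2 - p.1)) := by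
  refine pd_zero_eq_of_hasDerivAt (differentiableAt_case1aE hp) ?_
  have hyx := sub_ne_zero_of_mem_case1aDomain hp
  obtain ⟨hx, hy, -⟩ := hp
  refine (((hasDerivAt_const p.1 1).fun_div (hasDerivAt_id' p.1) hx).sub_const (1 / p.2)).fun_mul
    ((((hasDerivAt_id' p.1).const_mul (-3)).exp.const_mul c).fun_div (hasDerivAt_id' p.1) hx)
    |>.congr_deriv ?_
  unfold case1aE
  field_simp
  ring

lemma pd_one_case1aE (hp : p ∈ case1aDomain) :
    pd 1 (case1aE c) p = case1aE c p * (1 / (p.2 - p.1) - 1 / p.2) := by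
  refine pd_one_eq_of_hasDerivAt (differentiableAt_case1aE hp) ?_
  have hyx := sub_ne_zero_of_mem_case1aDomain hp
  obtain ⟨hx, hy, -⟩ := hp
  refine (((hasDerivAt_const p.2 1).fun_div (hasDerivAt_id' p.2) hy).const_sub (1 / p.1)).mul_const
    (c * exp (-3 * p.1) / p.1) |>.congr_deriv ?_
  unfold case1aE
  field_simp
  ring

lemma pd_zero_case1aG (hp : p ∈ case1aDomain) :
    pd 0 case1aG p = case1aG p * (-1 / (p.2 - p.1) - 1 / p.1) := by
  refine pd_zero_eq_of_hasDerivAt (differentiableAt_case1aG hp) ?_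
  have hyx := sub_ne_zero_of_mem_case1aDomain hp
  obtain ⟨hx, hy, -⟩ := hp
  refine (((hasDerivAt_const p.1 1).fun_div (hasDerivAt_id' p.1) hx).sub_const (1 / p.2)).mul_const
    (exp (-3 * p.2) / p.2) |>.congr_deriv ?_
  unfold case1aG
  field_simp
  ring

lemma pd_one_case1aG (hp : p ∈ case1aDomain) :
    pd 1 case1aG p = case1aG p * (-3 + 1 / (p.2 - p.1) - 2 / p.2) := by
  refine pd_one_eq_of_hasDerivAt (differentiableAt_case1aG hp) ?_
  have hyx := sub_ne_zero_of_mem_case1aDomain hp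
  obtain ⟨hx, hy, -⟩ := hp
  refine (((hasDerivAt_const p.2 1).fun_div (hasDerivAt_id' p.2) hy).const_sub (1 / p.1)).fun_mul
    ((((hasDerivAt_id' p.2).const_mul (-3)).exp).fun_div (hasDerivAt_id' p.2) hy)
    |>.congr_deriv ?_
  unfold case1aG
  field_simp
  ring

lemma pK0_case1a (hc : c ≠ 0) (hp : p ∈ case1aDomain) :
    pK0 (case1aE c) (fun _ => 0) case1aG p = c * exp (3 * (p.2 - p.1)) / (2 * (p.2 - p.1)) := by
  rw [pK0_diag (case1aE_ne_zero hc hp) (case1aG_ne_zero hp), pd_one_case1aE hp]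
  have hyx := sub_ne_zero_of_mem_case1aDomain hp
  obtain ⟨hx, hy, -⟩ := hp
  rw [show 3 * (p.2 - p.1) = -3 * p.1 - -3 * p.2 by ring, exp_sub]
  unfold case1aE case1aG
  field_simp
  ring

lemma pK1_case1a (hc : c ≠ 0) (hp : p ∈ case1aDomain) :
    pK1 (case1aE c) (fun _ => 0) case1aG p = 1 / (2 * (p.2 - p.1)) - 3 / 2 := by
  have hE := case1aE_ne_zero hc hp
  have hG := case1aG_ne_zero hp
  rw [pK1_diag hE hG, pd_zero_case1aE hp, pd_zero_case1aG hp]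
  field_simp
  ring

lemma pK2_case1a (hc : c ≠ 0) (hp : p ∈ case1aDomain) :
    pK2 (case1aE c) (fun _ => 0) case1aG p = 1 / (2 * (p.2 - p.1)) + 3 / 2 := by
  have hE := case1aE_ne_zero hc hp
  have hG := case1aG_ne_zero hp
  rw [pK2_diag hE hG, pd_one_case1aE hp, pd_one_case1aG hp]
  field_simp
  ring

lemma pK3_case1a (hc : c ≠ 0) (hp : p ∈ case1aDomain) :
    pK3 (case1aE c) (fun _ => 0) case1aG p = exp (-3 * (p.2 - p.1)) / (2 * c * (p.2 - p.1)) := by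
  rw [pK3_diag (case1aE_ne_zero hc hp) (case1aG_ne_zero hp), pd_zero_case1aG hp]
  have hyx := sub_ne_zero_of_mem_case1aDomain hp
  obtain ⟨hx, hy, -⟩ := hp
  rw [show -3 * (p.2 - p.1) = -3 * p.2 - -3 * p.1 by ring, exp_sub]
  unfold case1aE case1aG
  field_simp
  ring

lemma case1a_not_homothety_at (hc : c ≠ 0) (hp : p ∈ case1aDomain) (lam : ℝ)
    (hE : pd 0 (case1aE c) p + pd 1 (case1aE c) p = lam * case1aE c p)
    (hG : pd 0 case1aG p + pd 1 case1aG p = lam * case1aG p) : False := by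
  rw [pd_zero_case1aE hp, pd_one_case1aE hp, ← mul_add, mul_comm lam] at hE
  rw [pd_zero_case1aG hp, pd_one_case1aG hp, ← mul_add, mul_comm lam] at hG
  have hlamE := mul_left_cancel₀ (case1aE_ne_zero hc hp) hE
  have hlamG := mul_left_cancel₀ (case1aG_ne_zero hp) hG
  have hinv : 1 / p.1 = 1 / p.2 := by linear_combination hlamG - hlamE
  exact hp.2.2 (by simpa using hinv)

end Case1a

theorem stmt18_general
    (c : ℝ) (hc : c ≠ 0)
    (U : Set (ℝ × ℝ))
    (hUne : U.Nonempty)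
    (hUsub : U ⊆ {p : ℝ × ℝ | p.1 ≠ 0 ∧ p.2 ≠ 0 ∧ p.1 ≠ p.2})
    (E F G : ℝ × ℝ → ℝ)
    (hE : ∀ p, E p = (1 / p.1 - 1 / p.2) * (c * Real.exp (-3 * p.1) / p.1))
    (hF : ∀ p, F p = 0)
    (hG : ∀ p, G p = (1 / p.1 - 1 / p.2) * (Real.exp (-3 * p.2) / p.2)) :
    (∀ p ∈ U,
      pd 0 (pK0 E F G) p + pd 1 (pK0 E F G) p = 0 ∧
      pd 0 (pK1 E F G) p + pd 1 (pK1 E F G) p = 0 ∧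
      pd 0 (pK2 E F G) p + pd 1 (pK2 E F G) p = 0 ∧
      pd 0 (pK3 E F G) p + pd 1 (pK3 E F G) p = 0) ∧
    ¬ ∃ lam : ℝ, ∀ p ∈ U, ∀ i j : Fin 2,
        pd 0 (gc E F G i j) p + pd 1 (gc E F G i j) p = lam * gc E F G i j p := by
  obtain rfl : E = case1aE c := funext hE
  obtain rfl : F = fun _ => 0 := funext hF
  obtain rfl : G = case1aG := funext hG
  refine ⟨fun p hp => ?_, fun ⟨lam, hlam⟩ => ?_⟩
  · have hp' : p ∈ case1aDomain := hUsub hp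
    have ht := sub_ne_zero_of_mem_case1aDomain hp'
    refine ⟨?_, ?_, ?_, ?_⟩
    · exact pd_add_pd_eq_zero_of_eqOn_sub (fun t => c * exp (3 * t) / (2 * t))
        isOpen_case1aDomain (fun q hq => pK0_case1a hc hq) hp' (by fun_prop (disch := simpa))
    · exact pd_add_pd_eq_zero_of_eqOn_sub (fun t => 1 / (2 * t) - 3 / 2)
        isOpen_case1aDomain (fun q hq => pK1_case1a hc hq) hp' (by fun_prop (disch := simpa))
    · exact pd_add_pd_eq_zero_of_eqOn_sub (fun t => 1 / (2 * t) + 3 / 2)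
        isOpen_case1aDomain (fun q hq => pK2_case1a hc hq) hp' (by fun_prop (disch := simpa))
    · exact pd_add_pd_eq_zero_of_eqOn_sub (fun t => exp (-3 * t) / (2 * c * t))
        isOpen_case1aDomain (fun q hq => pK3_case1a hc hq) hp' (by fun_prop (disch := simp [*]))
  · obtain ⟨p, hp⟩ := hUne
    exact case1a_not_homothety_at hc (hUsub hp) lam (hlam p hp 0 0) (hlam p hp 1 1)

/-- For the metric of case 1a, the vector field `v = ∂/∂x + ∂/∂y` is a
projective vector field (the projective connection coefficients are invariant under the
flow of `v`), but `v` is not an infinitesimal homothety. -/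
theorem stmt18
    (c : ℝ) (hc : c ≠ 0)
    (U : Set (ℝ × ℝ)) (hUopen : IsOpen U) (hUconn : IsConnected U)
    (hUne : U.Nonempty)
    (hUsub : U ⊆ {p : ℝ × ℝ | p.1 ≠ 0 ∧ p.2 ≠ 0 ∧ p.1 ≠ p.2})
    (E F G : ℝ × ℝ → ℝ)
    (hE : ∀ p, E p = (1 / p.1 - 1 / p.2) * (c * Real.exp (-3 * p.1) / p.1))
    (hF : ∀ p, F p = 0)
    (hG : ∀ p, G p = (1 / p.1 - 1 / p.2) * (Real.exp (-3 * p.2) / p.2)) :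
    (∀ p ∈ U,
      pd 0 (pK0 E F G) p + pd 1 (pK0 E F G) p = 0 ∧
      pd 0 (pK1 E F G) p + pd 1 (pK1 E F G) p = 0 ∧
      pd 0 (pK2 E F G) p + pd 1 (pK2 E F G) p = 0 ∧
      pd 0 (pK3 E F G) p + pd 1 (pK3 E F G) p = 0) ∧
    ¬ ∃ lam : ℝ, ∀ p ∈ U, ∀ i j : Fin 2,
        pd 0 (gc E F G i j) p + pd 1 (gc E F G i j) p = lam * gc E F G i j p :=
  stmt18_general c hc U hUne hUsub E F G hE hF hG
end
end
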